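/- arXiv:2007.15598 — 2 statements merged into one kernel-verified Lean document; each statement's English description precedes it below -/
import Mathlib

section
/- Fix a round q ∈ {1, …, K}, a confidence level ϖ ∈ (0, 1), and θ > 0. Assume the loss is bounded: 0 ≤ Q(b, y, x) ≤ M for all b ∈ Λ with M > 0. Assume ρ_1, …, ρ_K are i.i.d. and integrable, and that each centered variable ρ_j − E[ρ_j] is σ²-subgaussian with σ² ≤ θ M² / m. Then with probability at least 1 − ϖ, simultaneously for all b ∈ Λ: R_s(b, q) ≤ R_t(b, q) + 2·E[ρ_1] + 2·M·√(θ · log(1/ϖ) / m). -/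
/-! For every model `b`, `Rs b q - R b ≤ ρ q`, and `R b - Rt b q` is the average over the
training folds `j ≠ q` of `R b - Rs b j ≤ ρ j`. Hence `Rs b q - Rt b q ≤ ∑ⱼ wⱼ ρ j` for the
weights `w q = 1`, `w j = 1 / (K - 1)` otherwise, uniformly in `b`. These weights sum to `2`
and their squares to at most `2`, so with `c = E[ρ 0]` the failure event lies in
`{t ≤ ∑ⱼ wⱼ (ρ j - c)}`, where `t = 2 M √(θ log(1/ϖ) / m)`; the centred sum is a weighted sum
of independent `θ M² / m`-subgaussian variables, hence `2 θ M² / m`-subgaussian, and the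
Chernoff bound `exp (-t² / (4 θ M² / m)) = ϖ` finishes. Boundedness of the loss keeps every
`ρ j` in `[0, M]`: the suprema are over bounded families (an unbounded `⨆` in `ℝ` would be
the junk value `0`), and all exponential moments exist. -/

open MeasureTheory ProbabilityTheory

def fold (K m j : ℕ) : Finset ℕ :=
  (Finset.range (K * m)).filter (fun i => i / m = j)

noncomputable def Rs {Ω E Λ : Type*} (K m : ℕ) (z : ℕ → Ω → E) (Q : Λ → E → ℝ)
    (b : Λ) (q : ℕ) (ω : Ω) : ℝ :=
  (1 / (m : ℝ)) * ∑ i ∈ fold K m q, Q b (z i ω)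

noncomputable def Rt {Ω E Λ : Type*} (K m : ℕ) (z : ℕ → Ω → E) (Q : Λ → E → ℝ)
    (b : Λ) (q : ℕ) (ω : Ω) : ℝ :=
  (1 / ((K * m - m : ℕ) : ℝ)) *
    ∑ i ∈ (Finset.range (K * m)).filter (fun i => i / m ≠ q), Q b (z i ω)

noncomputable def popErr {Ω E Λ : Type*} [MeasurableSpace Ω] (P : Measure Ω)
    (z : ℕ → Ω → E) (Q : Λ → E → ℝ) (b : Λ) : ℝ :=
  ∫ ω, Q b (z 0 ω) ∂P

noncomputable def rho {Ω E Λ : Type*} [MeasurableSpace Ω] (P : Measure Ω)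
    (K m : ℕ) (z : ℕ → Ω → E) (Q : Λ → E → ℝ) (j : ℕ) (ω : Ω) : ℝ :=
  ⨆ b : Λ, |Rs K m z Q b j ω - popErr P z Q b|

open Finset hiding fold
open scoped NNReal

lemma fold_eq_Ico {K m j : ℕ} (hj : j < K) : fold K m j = Ico (j * m) (j * m + m) := by
  rcases Nat.eq_zero_or_pos m with rfl | hm
  · simp [fold]
  ext i
  have hjK : j * m + m ≤ K * m := by nlinarith
  simp only [fold, mem_filter, mem_range, mem_Ico, Nat.div_eq_iff hm]
  omega

lemma card_fold {K m j : ℕ} (hj : j < K) : #(fold K m j) = m := by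
  simp [fold_eq_Ico hj]

lemma sum_filter_div_ne_eq_sum_fold {M : Type*} [AddCommMonoid M] {K m q : ℕ} (f : ℕ → M) :
    ∑ i ∈ (range (K * m)).filter (fun i => i / m ≠ q), f i
      = ∑ j ∈ (range K).erase q, ∑ i ∈ fold K m j, f i := by
  rw [← sum_fiberwise_of_maps_to (g := fun i => i / m) (t := (range K).erase q)]
  · refine sum_congr rfl fun j hj => congr_arg₂ _ ?_ rfl
    ext i
    simp only [fold, mem_filter, mem_range]
    have hjq := (mem_erase.mp hj).1
    constructor
    · exact fun h => ⟨h.1.1, h.2⟩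
    · rintro ⟨h, rfl⟩
      exact ⟨⟨h, hjq⟩, rfl⟩
  · intro i hi
    simp only [mem_filter, mem_range] at hi
    exact mem_erase.mpr
      ⟨hi.2, mem_range.mpr (Nat.div_lt_of_lt_mul (by rw [mul_comm]; exact hi.1))⟩

noncomputable def cvWeight (K q j : ℕ) : ℝ := if j = q then 1 else ((K : ℝ) - 1)⁻¹

lemma sum_range_cvWeight_mul {K q : ℕ} (hq : q < K) (f : ℕ → ℝ) :
    ∑ j ∈ range K, cvWeight K q j * f j
      = f q + ((K : ℝ) - 1)⁻¹ * ∑ j ∈ (range K).erase q, f j := by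
  rw [← add_sum_erase _ _ (mem_range.mpr hq), mul_sum]
  congr 1
  · simp [cvWeight]
  · exact sum_congr rfl fun j hj => by simp [cvWeight, (mem_erase.mp hj).1]

lemma inv_sub_one_mul_card_erase_range {K q : ℕ} (hK : 2 ≤ K) (hq : q < K) :
    ((K : ℝ) - 1)⁻¹ * #((range K).erase q) = 1 := by
  have hK' : (2 : ℝ) ≤ K := by exact_mod_cast hK
  rw [card_erase_of_mem (mem_range.mpr hq), card_range, Nat.cast_sub (by omega)]
  push_cast
  field_simp [show (K : ℝ) - 1 ≠ 0 by linarith]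

lemma sum_erase_cvWeight {K q : ℕ} (hK : 2 ≤ K) (hq : q < K) :
    ∑ j ∈ (range K).erase q, cvWeight K q j = 1 := by
  have hw : ∀ j ∈ (range K).erase q, cvWeight K q j = ((K : ℝ) - 1)⁻¹ := fun j hj =>
    if_neg (mem_erase.mp hj).1
  rw [sum_congr rfl hw, sum_const, nsmul_eq_mul, mul_comm,
    inv_sub_one_mul_card_erase_range hK hq]

lemma sum_range_cvWeight {K q : ℕ} (hK : 2 ≤ K) (hq : q < K) :
    ∑ j ∈ range K, cvWeight K q j = 2 := by
  rw [← add_sum_erase _ _ (mem_range.mpr hq), sum_erase_cvWeight hK hq, cvWeight, if_pos rfl]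
  norm_num

lemma sum_range_cvWeight_sq_le {K q : ℕ} (hK : 2 ≤ K) (hq : q < K) :
    ∑ j ∈ range K, cvWeight K q j ^ 2 ≤ 2 := by
  have hK' : (2 : ℝ) ≤ K := by exact_mod_cast hK
  have hw : ((K : ℝ) - 1)⁻¹ ≤ 1 := inv_le_one_of_one_le₀ (by linarith)
  simp only [sq]
  rw [sum_range_cvWeight_mul hq, sum_erase_cvWeight hK hq, cvWeight, if_pos rfl]
  linarith

lemma sum_fin_cvWeight_mul_sub {K q : ℕ} (hK : 2 ≤ K) (hq : q < K) (f : ℕ → ℝ) (c : ℝ) :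
    ∑ j : Fin K, cvWeight K q j * (f j - c) = ∑ j ∈ range K, cvWeight K q j * f j - 2 * c := by
  simp only [mul_sub, sum_sub_distrib, ← sum_mul]
  rw [Fin.sum_univ_eq_sum_range (fun j => cvWeight K q j * f j),
    Fin.sum_univ_eq_sum_range (cvWeight K q), sum_range_cvWeight hK hq]

lemma one_sub_measureReal_le_of_compl_subset {α : Type*} [MeasurableSpace α] {μ : Measure α}
    [IsProbabilityMeasure μ] {s t : Set α} (h : sᶜ ⊆ t) : 1 - μ.real t ≤ μ.real s := by
  have := measureReal_union_le (μ := μ) s sᶜ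
  rw [Set.union_compl_self, probReal_univ] at this
  linarith [measureReal_mono (μ := μ) h]

namespace ProbabilityTheory.HasSubgaussianMGF

variable {Ω : Type*} [MeasurableSpace Ω] {μ : Measure Ω} {X : Ω → ℝ} {c : ℝ≥0}

lemma mono (h : HasSubgaussianMGF X c μ) {c' : ℝ≥0} (hc : c ≤ c') :
    HasSubgaussianMGF X c' μ where
  integrable_exp_mul := h.integrable_exp_mul
  mgf_le t := (h.mgf_le t).trans (Real.exp_le_exp.mpr (by gcongr))

lemma of_abs_le [IsFiniteMeasure μ] (hX : AEMeasurable X μ) {C : ℝ}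
    (hC : ∀ᵐ ω ∂μ, |X ω| ≤ C) (hmgf : ∀ t, mgf X μ t ≤ Real.exp (c * t ^ 2 / 2)) :
    HasSubgaussianMGF X c μ where
  integrable_exp_mul t := by
    refine Integrable.of_bound (by fun_prop) (Real.exp (|t| * C)) (hC.mono fun ω hω => ?_)
    rw [Real.norm_eq_abs, Real.abs_exp, Real.exp_le_exp]
    calc t * X ω ≤ |t| * |X ω| := abs_mul t (X ω) ▸ le_abs_self _
      _ ≤ |t| * C := by gcongr
  mgf_le := hmgf

lemma sum_mul_of_iIndepFun {ι : Type*} {X : ι → Ω → ℝ} (h_indep : iIndepFun X μ) (a : ι → ℝ)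
    {c : ι → ℝ≥0} {s : Finset ι} (h : ∀ i ∈ s, HasSubgaussianMGF (X i) (c i) μ) :
    HasSubgaussianMGF (fun ω => ∑ i ∈ s, a i * X i ω)
      (∑ i ∈ s, ⟨a i ^ 2, sq_nonneg _⟩ * c i) μ :=
  sum_of_iIndepFun (h_indep.comp (fun i x => a i * x) fun i => measurable_const_mul (a i))
    fun i hi => (h i hi).const_mul (a i)

lemma measureReal_ge_sqrt_le (h : HasSubgaussianMGF X c μ) (hc : 0 < c) {δ : ℝ}
    (hδ0 : 0 < δ) (hδ1 : δ ≤ 1) :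
    μ.real {ω | √(2 * c * Real.log (1 / δ)) ≤ X ω} ≤ δ := by
  have hlog : 0 ≤ Real.log (1 / δ) := Real.log_nonneg (one_le_one_div hδ0 hδ1)
  have hc' : (0 : ℝ) < c := hc
  refine (h.measure_ge_le (Real.sqrt_nonneg _)).trans_eq ?_
  rw [Real.sq_sqrt (by positivity),
    show -(2 * c * Real.log (1 / δ)) / (2 * c) = -Real.log (1 / δ) by field_simp,
    Real.exp_neg, Real.exp_log (by positivity), one_div, inv_inv]

lemma sum_cvWeight_mul {K q : ℕ} (hK : 2 ≤ K) (hq : q < K) {Y : Fin K → Ω → ℝ}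
    (h_indep : iIndepFun Y μ) {s : ℝ≥0} (h : ∀ j, HasSubgaussianMGF (Y j) s μ) :
    HasSubgaussianMGF (fun ω => ∑ j : Fin K, cvWeight K q j * Y j ω) (2 * s) μ := by
  refine (sum_mul_of_iIndepFun h_indep _ fun j _ => h j).mono ?_
  rw [← NNReal.coe_le_coe, NNReal.coe_sum]
  change ∑ j : Fin K, cvWeight K q j ^ 2 * (s : ℝ) ≤ 2 * s
  rw [← sum_mul, Fin.sum_univ_eq_sum_range (fun j => cvWeight K q j ^ 2)]
  gcongr
  exact sum_range_cvWeight_sq_le hK hq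

end ProbabilityTheory.HasSubgaussianMGF

section CrossValidation

variable {Ω E Λ : Type*} {K m : ℕ} {z : ℕ → Ω → E} {Q : Λ → E → ℝ} {M : ℝ}

lemma Rs_nonneg (hQ : ∀ b e, 0 ≤ Q b e) (b : Λ) (j : ℕ) (ω : Ω) : 0 ≤ Rs K m z Q b j ω :=
  mul_nonneg (by positivity) (sum_nonneg fun i _ => hQ b _)

lemma Rs_le (hm : 0 < m) (hQ : ∀ b e, Q b e ≤ M) (b : Λ) {j : ℕ} (hj : j < K) (ω : Ω) :
    Rs K m z Q b j ω ≤ M := by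
  have hsum : ∑ i ∈ fold K m j, Q b (z i ω) ≤ m * M := by
    simpa [card_fold hj] using sum_le_card_nsmul (fold K m j) _ _ fun i _ => hQ b (z i ω)
  have hm' : (0 : ℝ) < m := by exact_mod_cast hm
  calc Rs K m z Q b j ω ≤ 1 / m * (m * M) := by unfold Rs; gcongr
    _ = M := by field_simp

lemma Rt_eq_mul_sum_Rs (hK : 0 < K) (b : Λ) (q : ℕ) (ω : Ω) :
    Rt K m z Q b q ω = ((K : ℝ) - 1)⁻¹ * ∑ j ∈ (range K).erase q, Rs K m z Q b j ω := by
  have hn : ((K * m - m : ℕ) : ℝ) = ((K : ℝ) - 1) * m := by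
    rw [Nat.cast_sub (Nat.le_mul_of_pos_left m hK)]
    push_cast
    ring
  simp only [Rt, Rs, sum_filter_div_ne_eq_sum_fold, hn, mul_sum, one_div, mul_inv, mul_assoc]

variable [MeasurableSpace Ω] {P : Measure Ω}

lemma popErr_nonneg (hQ : ∀ b e, 0 ≤ Q b e) (b : Λ) : 0 ≤ popErr P z Q b :=
  integral_nonneg fun _ => hQ b _

lemma rho_nonneg (j : ℕ) (ω : Ω) : 0 ≤ rho P K m z Q j ω :=
  Real.iSup_nonneg fun _ => abs_nonneg _

variable [IsProbabilityMeasure P]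

lemma popErr_le (hQ0 : ∀ b e, 0 ≤ Q b e) (hQM : ∀ b e, Q b e ≤ M)
    (b : Λ) : popErr P z Q b ≤ M := by
  simpa [popErr] using integral_mono_of_nonneg (μ := P) (ae_of_all _ fun ω => hQ0 b (z 0 ω))
    (integrable_const M) (ae_of_all _ fun ω => hQM b (z 0 ω))

lemma abs_Rs_sub_popErr_le (hm : 0 < m) (hQ0 : ∀ b e, 0 ≤ Q b e)
    (hQM : ∀ b e, Q b e ≤ M) (b : Λ) {j : ℕ} (hj : j < K) (ω : Ω) :
    |Rs K m z Q b j ω - popErr P z Q b| ≤ M :=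
  abs_sub_le_of_nonneg_of_le (Rs_nonneg hQ0 b j ω) (Rs_le hm hQM b hj ω)
    (popErr_nonneg hQ0 b) (popErr_le hQ0 hQM b)

lemma abs_Rs_sub_popErr_le_rho (hm : 0 < m) (hQ0 : ∀ b e, 0 ≤ Q b e)
    (hQM : ∀ b e, Q b e ≤ M) (b : Λ) {j : ℕ} (hj : j < K) (ω : Ω) :
    |Rs K m z Q b j ω - popErr P z Q b| ≤ rho P K m z Q j ω :=
  le_ciSup (f := fun b => |Rs K m z Q b j ω - popErr P z Q b|)
    ⟨M, by rintro _ ⟨b', rfl⟩; exact abs_Rs_sub_popErr_le hm hQ0 hQM b' hj ω⟩ b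

lemma rho_le (hm : 0 < m) (hQ0 : ∀ b e, 0 ≤ Q b e)
    (hQM : ∀ b e, Q b e ≤ M) (hM : 0 ≤ M) {j : ℕ} (hj : j < K) (ω : Ω) :
    rho P K m z Q j ω ≤ M :=
  Real.iSup_le (fun b => abs_Rs_sub_popErr_le (P := P) hm hQ0 hQM b hj ω) hM

lemma Rs_sub_Rt_le_sum_cvWeight_mul_rho (hK : 2 ≤ K) (hm : 0 < m) {q : ℕ} (hq : q < K)
    (hQ0 : ∀ b e, 0 ≤ Q b e) (hQM : ∀ b e, Q b e ≤ M) (b : Λ) (ω : Ω) :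
    Rs K m z Q b q ω - Rt K m z Q b q ω
      ≤ ∑ j ∈ range K, cvWeight K q j * rho P K m z Q j ω := by
  have hvalid : Rs K m z Q b q ω - popErr P z Q b ≤ rho P K m z Q q ω :=
    (le_abs_self _).trans (abs_Rs_sub_popErr_le_rho hm hQ0 hQM b hq ω)
  have htrain : ∀ j ∈ (range K).erase q,
      popErr P z Q b - Rs K m z Q b j ω ≤ rho P K m z Q j ω := fun j hj =>
    (le_abs_self _).trans ((abs_sub_comm _ _).trans_le
      (abs_Rs_sub_popErr_le_rho hm hQ0 hQM b (mem_range.mp (mem_of_mem_erase hj)) ω))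
  have hpop : ((K : ℝ) - 1)⁻¹ * ∑ j ∈ (range K).erase q, popErr P z Q b = popErr P z Q b := by
    rw [sum_const, nsmul_eq_mul, ← mul_assoc, inv_sub_one_mul_card_erase_range hK hq, one_mul]
  have hK' : (0 : ℝ) ≤ K - 1 := by linarith [show (2 : ℝ) ≤ K by exact_mod_cast hK]
  have havg := mul_le_mul_of_nonneg_left (sum_le_sum htrain) (inv_nonneg.mpr hK')
  rw [sum_sub_distrib, mul_sub, hpop] at havg
  rw [sum_range_cvWeight_mul hq, Rt_eq_mul_sum_Rs (by omega)]
  linarith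

end CrossValidation

lemma measurable_Rs {Ω E Λ : Type*} [MeasurableSpace Ω] [MeasurableSpace E] {K m : ℕ}
    {z : ℕ → Ω → E} {Q : Λ → E → ℝ} (hz : ∀ i < K * m, Measurable (z i))
    (hQ : ∀ b, Measurable (Q b)) (b : Λ) (j : ℕ) : Measurable (Rs K m z Q b j) :=
  (Finset.measurable_sum _ fun i hi =>
    (hQ b).comp (hz i (mem_range.mp (mem_filter.mp hi).1))).const_mul _

lemma measurable_rho {Ω E Λ : Type*} [MeasurableSpace Ω] [MeasurableSpace E] [Countable Λ]
    {P : Measure Ω} {K m : ℕ} {z : ℕ → Ω → E} {Q : Λ → E → ℝ}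
    (hz : ∀ i < K * m, Measurable (z i)) (hQ : ∀ b, Measurable (Q b)) (j : ℕ) :
    Measurable (rho P K m z Q j) :=
  Measurable.iSup fun b => ((measurable_Rs hz hQ b j).sub_const _).abs

lemma hasSubgaussianMGF_rho_sub_integral {Ω E Λ : Type*} [MeasurableSpace Ω]
    [MeasurableSpace E] [Countable Λ] {P : Measure Ω} [IsProbabilityMeasure P] {K m : ℕ}
    {z : ℕ → Ω → E} {Q : Λ → E → ℝ} {M : ℝ} (hz : ∀ i < K * m, Measurable (z i))
    (hQ : ∀ b, Measurable (Q b))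
    (hm : 0 < m) (hQ0 : ∀ b e, 0 ≤ Q b e) (hQM : ∀ b e, Q b e ≤ M) (hM : 0 ≤ M)
    {j : ℕ} (hj : j < K) {c : ℝ≥0}
    (hmgf : ∀ t, ∫ ω, Real.exp (t * (rho P K m z Q j ω - ∫ ω', rho P K m z Q j ω' ∂P)) ∂P
      ≤ Real.exp (c * t ^ 2 / 2)) :
    HasSubgaussianMGF (fun ω => rho P K m z Q j ω - ∫ ω', rho P K m z Q j ω' ∂P) c P := by
  refine .of_abs_le (C := M + _) ((measurable_rho hz hQ j).sub_const _).aemeasurable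
    (ae_of_all _ fun ω => (abs_sub _ _).trans (add_le_add_left ?_ _)) hmgf
  rw [abs_of_nonneg (rho_nonneg _ _)]
  exact rho_le hm hQ0 hQM hM hj ω

theorem round_q_bound_bounded_loss_general
    {Ω E Λ : Type*} [MeasurableSpace Ω] [MeasurableSpace E] [Countable Λ]
    (P : Measure Ω) [IsProbabilityMeasure P]
    (K m : ℕ) (hK : 2 ≤ K) (hm : 1 ≤ m)
    (z : ℕ → Ω → E)
    (hz_meas : ∀ i < K * m, Measurable (z i))
    (Q : Λ → E → ℝ)
    (hQ_meas : ∀ b, Measurable (Q b))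
    (hQ_nonneg : ∀ b e, 0 ≤ Q b e)
    (q : ℕ) (hq : q < K)
    (ϖ θ M σ : ℝ) (hϖ : ϖ ∈ Set.Ioo (0 : ℝ) 1) (hθ : 0 < θ) (hM : 0 < M)
    (hQ_bdd : ∀ b e, Q b e ≤ M)
    (hρ_indep : iIndepFun
      (fun j : Fin K => rho P K m z Q j) P)
    (hρ_ident : ∀ j < K, P.map (rho P K m z Q j) = P.map (rho P K m z Q 0))
    (hσ2 : σ ^ 2 ≤ θ * M ^ 2 / m)
    (hsub : ∀ j < K, ∀ lam : ℝ,
      ∫ ω, Real.exp (lam * (rho P K m z Q j ω - ∫ ω', rho P K m z Q j ω' ∂P)) ∂P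
        ≤ Real.exp (lam ^ 2 * σ ^ 2 / 2)) :
    (P {ω | ∀ b : Λ,
        Rs K m z Q b q ω ≤ Rt K m z Q b q ω
          + 2 * (∫ ω', rho P K m z Q 0 ω' ∂P)
          + 2 * M * Real.sqrt (θ * Real.log (1 / ϖ) / m)}).toReal
      ≥ 1 - ϖ := by
  obtain ⟨hϖ0, hϖ1⟩ := hϖ
  set c := ∫ ω', rho P K m z Q 0 ω' ∂P
  have hρ_meas := measurable_rho (P := P) hz_meas hQ_meas
  have hmean : ∀ j < K, ∫ ω, rho P K m z Q j ω ∂P = c := fun j hj =>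
    (IdentDistrib.mk (hρ_meas j).aemeasurable (hρ_meas 0).aemeasurable (hρ_ident j hj)).integral_eq
  let s : ℝ≥0 := ⟨θ * M ^ 2 / m, by positivity⟩
  have hs : (s : ℝ) = θ * M ^ 2 / m := rfl
  have hsubG (j : Fin K) : HasSubgaussianMGF (fun ω => rho P K m z Q j ω - c) s P := by
    rw [← hmean j j.isLt]
    refine hasSubgaussianMGF_rho_sub_integral hz_meas hQ_meas hm hQ_nonneg hQ_bdd hM.le j.isLt
      fun t => (hsub j j.isLt t).trans (Real.exp_le_exp.mpr ?_)
    rw [hs]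
    nlinarith [sq_nonneg t]
  have hS : HasSubgaussianMGF (fun ω => ∑ j : Fin K, cvWeight K q j * (rho P K m z Q j ω - c))
      (2 * s) P := .sum_cvWeight_mul hK hq
    (hρ_indep.comp (fun _ x => x - c) fun _ => measurable_id.sub_const c) hsubG
  have ht : √(2 * (2 * s : ℝ≥0) * Real.log (1 / ϖ)) = 2 * M * √(θ * Real.log (1 / ϖ) / m) := by
    rw [NNReal.coe_mul, NNReal.coe_ofNat, hs, show 2 * (2 * (θ * M ^ 2 / m)) * Real.log (1 / ϖ)
      = (2 * M) ^ 2 * (θ * Real.log (1 / ϖ) / m) by ring, Real.sqrt_mul (by positivity),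
      Real.sqrt_sq (by positivity)]
  have hs_pos : 0 < 2 * s := mul_pos two_pos (by rw [← NNReal.coe_pos, hs]; positivity)
  have htail := hS.measureReal_ge_sqrt_le hs_pos hϖ0 hϖ1.le
  rw [ht] at htail
  refine (sub_le_sub_left htail 1).trans (one_sub_measureReal_le_of_compl_subset fun ω hω => ?_)
  simp only [Set.mem_compl_iff, Set.mem_ofPred_eq, not_forall, not_le] at hω ⊢
  obtain ⟨b, hb⟩ := hω
  have := Rs_sub_Rt_le_sum_cvWeight_mul_rho (P := P) (z := z) hK hm hq hQ_nonneg hQ_bdd b ω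
  linarith [sum_fin_cvWeight_mul_sub hK hq (fun j => rho P K m z Q j ω) c]

/-- **Upper bound for the round-`q` prediction error, bounded-loss case.**
If the loss is bounded by `M > 0` and each centered `ρ j - E[ρ j]` is `σ²`-subgaussian
with `σ² ≤ θ M² / m`, then with probability at least `1 - ϖ`, simultaneously for all
`b ∈ Λ`, `Rs b q ≤ Rt b q + 2 E[ρ 0] + 2 M √(θ log(1/ϖ) / m)`. -/
theorem round_q_bound_bounded_loss
    {Ω E Λ : Type*} [MeasurableSpace Ω] [MeasurableSpace E] [Countable Λ] [Nonempty Λ]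
    (P : Measure Ω) [IsProbabilityMeasure P]
    (K m : ℕ) (hK : 2 ≤ K) (hm : 1 ≤ m)
    (z : ℕ → Ω → E)
    (hz_meas : ∀ i < K * m, Measurable (z i))
    (hz_indep : iIndepFun
      (fun i : Fin (K * m) => z i) P)
    (hz_ident : ∀ i < K * m, P.map (z i) = P.map (z 0))
    (Q : Λ → E → ℝ)
    (hQ_meas : ∀ b, Measurable (Q b))
    (hQ_nonneg : ∀ b e, 0 ≤ Q b e)
    (hQ_L2 : ∀ b, MemLp (fun ω => Q b (z 0 ω)) 2 P)
    (q : ℕ) (hq : q < K)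
    (ϖ θ M σ : ℝ) (hϖ : ϖ ∈ Set.Ioo (0 : ℝ) 1) (hθ : 0 < θ) (hM : 0 < M)
    (hQ_bdd : ∀ b e, Q b e ≤ M)
    (hρ_indep : iIndepFun
      (fun j : Fin K => rho P K m z Q j) P)
    (hρ_ident : ∀ j < K, P.map (rho P K m z Q j) = P.map (rho P K m z Q 0))
    (hρ_int : ∀ j < K, Integrable (rho P K m z Q j) P)
    (hσ2 : σ ^ 2 ≤ θ * M ^ 2 / m)
    (hsub : ∀ j < K, ∀ lam : ℝ,
      ∫ ω, Real.exp (lam * (rho P K m z Q j ω - ∫ ω', rho P K m z Q j ω' ∂P)) ∂P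
        ≤ Real.exp (lam ^ 2 * σ ^ 2 / 2)) :
    (P {ω | ∀ b : Λ,
        Rs K m z Q b q ω ≤ Rt K m z Q b q ω
          + 2 * (∫ ω', rho P K m z Q 0 ω' ∂P)
          + 2 * M * Real.sqrt (θ * Real.log (1 / ϖ) / m)}).toReal
      ≥ 1 - ϖ :=
  round_q_bound_bounded_loss_general P K m hK hm z hz_meas Q hQ_meas hQ_nonneg q hq ϖ θ M σ hϖ hθ hM
    hQ_bdd hρ_indep hρ_ident hσ2 hsub
end

section
/- Fix a round q ∈ {1, …, K} and θ > 0, and let S = sup_{b ∈ Λ} Var(Q(b, y_1, x_1)) < ∞. Assume the interchange inequalities: E[ sup_{b ∈ Λ} (R_s(b, q) − R(b))² ] ≤ θ · sup_{b ∈ Λ} E[ (R_s(b, q) − R(b))² ] and E[ sup_{b ∈ Λ} (R_t(b, q) − R(b))² ] ≤ θ · sup_{b ∈ Λ} E[ (R_t(b, q) − R(b))² ]. Then E[U_q²] ≤ θ · S · (1/√m + 1/√n_t)², and in particular Var(U_q) ≤ E[U_q²] ≤ 4θS/m. -/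
open MeasureTheory ProbabilityTheory

/-- `U q`: supremum over the model class of the absolute gap between the round-`q`
prediction and training errors. -/
noncomputable def Ugap {Ω E Λ : Type*} [Nonempty Λ] (K m : ℕ) (z : ℕ → Ω → E)
    (Q : Λ → E → ℝ) (q : ℕ) (ω : Ω) : ℝ :=
  ⨆ b : Λ, |Rs K m z Q b q ω - Rt K m z Q b q ω|

/-! Write `X b = Rs b q - R b` and `Y b = Rt b q - R b`. They are measurable with respect to the
σ-algebras generated by the validation fold and by the training folds, which are independent, and
`U q = sup_b |X b - Y b| ≤ sup_b |X b| + sup_b |Y b|`. For independent `a, c ∈ L²`,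
`E[(a + c)²] ≤ (√E[a²] + √E[c²])²`, and the interchange inequalities bound `E[sup_b X b²]` by
`θ sup_b Var(Rs b q) = θ S / m` (and similarly for the training error with `n_t`).

Since a real supremum of an unbounded family is `0`, the pointwise bound on `U q` needs the two
families to be bounded almost surely wherever their difference is. This follows from independence
and the uniform Chebyshev bounds `P(|X b| ≥ t) ≤ S / (m t²)`: for `Y` to be unbounded while
`X - Y` stays bounded, `X` would have to follow `Y` to arbitrarily large values. The same
independence argument shows that `sup_b X b²` is integrable as soon as `U q²` is. -/

open scoped ENNReal

namespace Real

variable {ι : Sort*}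

lemma iSup_sq_eq_sq_iSup_abs (f : ι → ℝ) : ⨆ i, f i ^ 2 = (⨆ i, |f i|) ^ 2 := by
  simp only [← sq_abs (f _)]
  have habs : 0 ≤ ⨆ i, |f i| := iSup_nonneg fun _ => abs_nonneg _
  have hsq : 0 ≤ ⨆ i, |f i| ^ 2 := iSup_nonneg fun _ => sq_nonneg _
  by_cases hf : BddAbove (Set.range fun i => |f i|)
  · have hf2 : BddAbove (Set.range fun i => |f i| ^ 2) := by
      obtain ⟨r, hr⟩ := hf
      refine ⟨r ^ 2, ?_⟩
      rintro _ ⟨i, rfl⟩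
      exact pow_le_pow_left₀ (abs_nonneg _) (hr ⟨i, rfl⟩) 2
    refine le_antisymm
      (Real.iSup_le (fun i => pow_le_pow_left₀ (abs_nonneg _) (le_ciSup hf i) 2) (sq_nonneg _)) ?_
    have hle : ⨆ i, |f i| ≤ √(⨆ i, |f i| ^ 2) :=
      Real.iSup_le (fun i => Real.le_sqrt_of_sq_le (le_ciSup hf2 i)) (sqrt_nonneg _)
    exact (pow_le_pow_left₀ habs hle 2).trans_eq (sq_sqrt hsq)
  · have hf2 : ¬ BddAbove (Set.range fun i => |f i| ^ 2) := by
      rintro ⟨r, hr⟩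
      refine hf ⟨√r, ?_⟩
      rintro _ ⟨i, rfl⟩
      exact Real.le_sqrt_of_sq_le (hr ⟨i, rfl⟩)
    rw [iSup_of_not_bddAbove hf, iSup_of_not_bddAbove hf2, zero_pow two_ne_zero]

lemma iSup_abs_sub_le_add {f g : ι → ℝ} (hf : BddAbove (Set.range fun i => |f i|))
    (hg : BddAbove (Set.range fun i => |g i|)) :
    ⨆ i, |f i - g i| ≤ (⨆ i, |f i|) + ⨆ i, |g i| :=
  Real.iSup_le (fun i => (abs_sub _ _).trans (add_le_add (le_ciSup hf i) (le_ciSup hg i)))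
    (add_nonneg (iSup_nonneg fun _ => abs_nonneg _) (iSup_nonneg fun _ => abs_nonneg _))

lemma iSup_abs_le_iSup_abs_sub_add {f g : ι → ℝ} {k : ℝ} (hk : 0 ≤ k) (hg : ∀ i, |g i| ≤ k) :
    ⨆ i, |f i| ≤ (⨆ i, |f i - g i|) + k := by
  by_cases hf : BddAbove (Set.range fun i => |f i|)
  · have hfg : BddAbove (Set.range fun i => |f i - g i|) := by
      obtain ⟨r, hr⟩ := hf
      refine ⟨r + k, ?_⟩
      rintro _ ⟨i, rfl⟩
      exact (abs_sub _ _).trans (add_le_add (hr ⟨i, rfl⟩) (hg i))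
    refine Real.iSup_le (fun i => ?_) (add_nonneg (iSup_nonneg fun _ => abs_nonneg _) hk)
    calc |f i| ≤ |f i - g i| + |g i| := sub_le_iff_le_add.1 (abs_sub_abs_le_abs_sub _ _)
      _ ≤ _ := add_le_add (le_ciSup hfg i) (hg i)
  · rw [iSup_of_not_bddAbove hf]
    exact add_nonneg (iSup_nonneg fun _ => abs_nonneg _) hk

end Real

section L2

variable {Ω : Type*} [MeasurableSpace Ω] {P : Measure Ω} [IsProbabilityMeasure P]

lemma abs_integral_le_sqrt_integral_sq {f : Ω → ℝ} (hf : MemLp f 2 P) :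
    |∫ ω, f ω ∂P| ≤ √(∫ ω, f ω ^ 2 ∂P) := by
  refine Real.abs_le_sqrt ?_
  have h := variance_nonneg f P
  rw [variance_eq_sub hf] at h
  simpa using h

lemma integral_add_sq_le_of_indepFun {f g : Ω → ℝ} (hf : MemLp f 2 P) (hg : MemLp g 2 P)
    (hfg : IndepFun f g P) :
    ∫ ω, (f ω + g ω) ^ 2 ∂P ≤ (√(∫ ω, f ω ^ 2 ∂P) + √(∫ ω, g ω ^ 2 ∂P)) ^ 2 := by
  have hf1 := hf.integrable one_le_two
  have hg1 := hg.integrable one_le_two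
  have hfg1 : Integrable (fun ω => 2 * (f ω * g ω)) P :=
    (hfg.integrable_mul hf1 hg1).const_mul 2
  have hexp : ∫ ω, (f ω + g ω) ^ 2 ∂P
      = ∫ ω, f ω ^ 2 ∂P + 2 * ((∫ ω, f ω ∂P) * ∫ ω, g ω ∂P) + ∫ ω, g ω ^ 2 ∂P := by
    simp only [add_sq, mul_assoc]
    rw [integral_add (f := fun ω => f ω ^ 2 + 2 * (f ω * g ω)) (hf.integrable_sq.add hfg1)
        hg.integrable_sq,
      integral_add hf.integrable_sq hfg1, integral_const_mul,
      hfg.integral_fun_mul_eq_mul_integral hf1.1 hg1.1]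
  have hprod : (∫ ω, f ω ∂P) * ∫ ω, g ω ∂P ≤ √(∫ ω, f ω ^ 2 ∂P) * √(∫ ω, g ω ^ 2 ∂P) :=
    (le_abs_self _).trans <| (abs_mul _ _).trans_le <|
      mul_le_mul (abs_integral_le_sqrt_integral_sq hf) (abs_integral_le_sqrt_integral_sq hg)
        (abs_nonneg _) (Real.sqrt_nonneg _)
  rw [hexp, add_sq, Real.sq_sqrt (integral_nonneg fun _ => sq_nonneg _),
    Real.sq_sqrt (integral_nonneg fun _ => sq_nonneg _)]
  linarith

end L2

section IndependentFamilies

open Filter Topology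

variable {Ω Λ : Type*} [Countable Λ] {m₁ m₂ : MeasurableSpace Ω} [mΩ : MeasurableSpace Ω]
  {P : Measure Ω} [IsProbabilityMeasure P] {X Y : Λ → Ω → ℝ}

/-- Split the event according to the first model, in an enumeration of `Λ`, at which `|Y|`
reaches `C + t`: these first-passage events are `m₂`-measurable and disjoint, and on each of
them `|X| ≥ t` at that model, an `m₁`-event independent of it. -/
theorem measure_forall_abs_sub_le_and_exists_le_abs_le (hm₂ : m₂ ≤ mΩ)
    (hind : Indep m₁ m₂ P) (hX : ∀ b, Measurable[m₁] (X b)) (hY : ∀ b, Measurable[m₂] (Y b))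
    {C t : ℝ} {δ : ℝ≥0∞} (htail : ∀ b, P {ω | t ≤ |X b ω|} ≤ δ) :
    P {ω | (∀ b, |X b ω - Y b ω| ≤ C) ∧ ∃ b, C + t ≤ |Y b ω|} ≤ δ := by
  obtain ⟨e, he⟩ := exists_injective_nat Λ
  set T : Λ → Set Ω := fun b =>
    {ω | C + t ≤ |Y b ω|} ∩ ⋂ (b') (_ : e b' < e b), {ω | |Y b' ω| < C + t}
  have hT : ∀ b, MeasurableSet[m₂] (T b) := fun b =>
    ((measurable_abs.comp (hY b)) measurableSet_Ici).inter <|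
      .iInter fun b' => .iInter fun _ => (measurable_abs.comp (hY b')) measurableSet_Iio
  have hdisj : Pairwise (Function.onFun Disjoint T) := by
    have key : ∀ {b b'}, e b < e b' → Disjoint (T b) (T b') := by
      refine fun {b b'} hlt => Set.disjoint_left.2 fun ω hb hb' => ?_
      exact (Set.mem_iInter₂.1 hb'.2 b hlt).not_ge (show C + t ≤ |Y b ω| from hb.1)
    intro b b' hne
    rcases (he.ne hne).lt_or_gt with hlt | hlt
    exacts [key hlt, (key hlt).symm]
  have hcover : {ω | (∀ b, |X b ω - Y b ω| ≤ C) ∧ ∃ b, C + t ≤ |Y b ω|} ⊆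
      ⋃ b, {ω | t ≤ |X b ω|} ∩ T b := by
    rintro ω ⟨hC, hex⟩
    set S : Set Λ := {b | C + t ≤ |Y b ω|}
    set b := Function.argminOn e S hex
    have hb : C + t ≤ |Y b ω| := Function.argminOn_mem e S hex
    refine Set.mem_iUnion.2 ⟨b, ?_, hb, Set.mem_iInter₂.2 fun b' hlt => ?_⟩
    · show t ≤ |X b ω|
      linarith [hC b, abs_sub_abs_le_abs_sub (Y b ω) (X b ω), abs_sub_comm (X b ω) (Y b ω)]
    · exact lt_of_not_ge fun h : C + t ≤ |Y b' ω| => Function.not_lt_argminOn e S h hlt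
  calc P _ ≤ ∑' b, P ({ω | t ≤ |X b ω|} ∩ T b) := (measure_mono hcover).trans (measure_iUnion_le _)
    _ = ∑' b, P {ω | t ≤ |X b ω|} * P (T b) := by
      congr! 2 with b
      exact (Indep_iff _ _ P).1 hind _ _ ((measurable_abs.comp (hX b)) measurableSet_Ici) (hT b)
    _ ≤ ∑' b, δ * P (T b) := ENNReal.tsum_le_tsum fun b => by gcongr; exact htail b
    _ = δ * P (⋃ b, T b) := by
      rw [ENNReal.tsum_mul_left, measure_iUnion hdisj fun b => hm₂ _ (hT b)]
    _ ≤ δ := mul_le_of_le_one_right' prob_le_one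

theorem ae_bddAbove_abs_of_bddAbove_abs_sub (hm₂ : m₂ ≤ mΩ) (hind : Indep m₁ m₂ P)
    (hX : ∀ b, Measurable[m₁] (X b)) (hY : ∀ b, Measurable[m₂] (Y b)) {c : ℝ}
    (htail : ∀ b t, 0 < t → P {ω | t ≤ |X b ω|} ≤ ENNReal.ofReal (c / t ^ 2)) :
    ∀ᵐ ω ∂P, BddAbove (Set.range fun b => |X b ω - Y b ω|) →
      BddAbove (Set.range fun b => |Y b ω|) := by
  rw [ae_iff]
  refine measure_mono_null (t := ⋃ C : ℕ, {ω | (∀ b, |X b ω - Y b ω| ≤ C) ∧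
    ¬ BddAbove (Set.range fun b => |Y b ω|)}) ?_ (measure_iUnion_null fun C => ?_)
  · rintro ω hω
    obtain ⟨⟨r, hr⟩, hunb⟩ := Classical.not_imp.1 hω
    exact Set.mem_iUnion.2 ⟨⌈r⌉₊, fun b => (hr ⟨b, rfl⟩).trans (Nat.le_ceil r), hunb⟩
  have hle : ∀ t > 0, P {ω | (∀ b, |X b ω - Y b ω| ≤ C) ∧
      ¬ BddAbove (Set.range fun b => |Y b ω|)} ≤ ENNReal.ofReal (c / t ^ 2) := by
    refine fun t ht => le_trans (measure_mono ?_)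
      (measure_forall_abs_sub_le_and_exists_le_abs_le (C := C) hm₂ hind hX hY (htail · t ht))
    rintro ω ⟨hC, hunb⟩
    obtain ⟨_, ⟨b, rfl⟩, hb⟩ := not_bddAbove_iff.1 hunb (C + t)
    exact ⟨hC, b, hb.le⟩
  have hlim : Tendsto (fun t : ℝ => ENNReal.ofReal (c / t ^ 2)) atTop (𝓝 0) := by
    simpa using ENNReal.tendsto_ofReal
      (tendsto_const_nhds.div_atTop (tendsto_pow_atTop two_ne_zero))
  exact nonpos_iff_eq_zero.1 (ge_of_tendsto hlim (eventually_gt_atTop 0 |>.mono hle))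

theorem ae_iSup_abs_sub_le_add (hm₁ : m₁ ≤ mΩ) (hm₂ : m₂ ≤ mΩ) (hind : Indep m₁ m₂ P)
    (hX : ∀ b, Measurable[m₁] (X b)) (hY : ∀ b, Measurable[m₂] (Y b)) {c₁ c₂ : ℝ}
    (htailX : ∀ b t, 0 < t → P {ω | t ≤ |X b ω|} ≤ ENNReal.ofReal (c₁ / t ^ 2))
    (htailY : ∀ b t, 0 < t → P {ω | t ≤ |Y b ω|} ≤ ENNReal.ofReal (c₂ / t ^ 2)) :
    ∀ᵐ ω ∂P, ⨆ b, |X b ω - Y b ω| ≤ (⨆ b, |X b ω|) + ⨆ b, |Y b ω| := by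
  filter_upwards [ae_bddAbove_abs_of_bddAbove_abs_sub hm₂ hind hX hY htailX,
    ae_bddAbove_abs_of_bddAbove_abs_sub hm₁ hind.symm hY hX htailY] with ω hYbdd hXbdd
  simp only [abs_sub_comm (Y _ ω)] at hXbdd
  by_cases hbdd : BddAbove (Set.range fun b => |X b ω - Y b ω|)
  · exact Real.iSup_abs_sub_le_add (hXbdd hbdd) (hYbdd hbdd)
  · rw [Real.iSup_of_not_bddAbove hbdd]
    exact add_nonneg (Real.iSup_nonneg fun _ => abs_nonneg _)
      (Real.iSup_nonneg fun _ => abs_nonneg _)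

theorem exists_measure_forall_abs_le_ne_zero (hm₂ : m₂ ≤ mΩ) (hind : Indep m₁ m₂ P)
    (hX : ∀ b, Measurable[m₁] (X b)) (hY : ∀ b, Measurable[m₂] (Y b)) {c : ℝ}
    (htail : ∀ b t, 0 < t → P {ω | t ≤ |X b ω|} ≤ ENNReal.ofReal (c / t ^ 2))
    (hbdd : P {ω | BddAbove (Set.range fun b => |X b ω - Y b ω|)} ≠ 0) :
    ∃ k : ℕ, P {ω | ∀ b, |Y b ω| ≤ k} ≠ 0 := by
  contrapose! hbdd
  refine nonpos_iff_eq_zero.1 <| (measure_mono_ae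
    (ae_bddAbove_abs_of_bddAbove_abs_sub hm₂ hind hX hY htail)).trans
      (measure_mono_null ?_ (measure_iUnion_null hbdd)).le
  rintro ω ⟨r, hr⟩
  exact Set.mem_iUnion.2 ⟨⌈r⌉₊, fun b => (hr ⟨b, rfl⟩).trans (Nat.le_ceil r)⟩

/-- On the `m₂`-event `s = {∀ b, |Y b| ≤ k}` we have `sup |X| ≤ sup |X - Y| + k`, and
independence turns the resulting bound on `E[(sup |X|)² 1_s]` into one on `E[(sup |X|)²] P(s)`. -/
theorem memLp_iSup_abs (hm₁ : m₁ ≤ mΩ) (hm₂ : m₂ ≤ mΩ) (hind : Indep m₁ m₂ P)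
    (hX : ∀ b, Measurable[m₁] (X b)) (hY : ∀ b, Measurable[m₂] (Y b)) {k : ℕ}
    (hk : P {ω | ∀ b, |Y b ω| ≤ k} ≠ 0)
    (hu : Integrable (fun ω => (⨆ b, |X b ω - Y b ω|) ^ 2) P) :
    MemLp (fun ω => ⨆ b, |X b ω|) 2 P := by
  set a := fun ω => ⨆ b, |X b ω|
  set s := {ω | ∀ b, |Y b ω| ≤ k}
  have ha : Measurable[m₁] a := Measurable.iSup fun b => measurable_abs.comp (hX b)
  have hs : MeasurableSet[m₂] s := by
    simp only [s, Set.ofPred_forall]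
    exact .iInter fun b => (measurable_abs.comp (hY b)) measurableSet_Iic
  have hbound : ∀ ω, ENNReal.ofReal (a ω ^ 2) * s.indicator 1 ω
      ≤ ENNReal.ofReal (2 * (⨆ b, |X b ω - Y b ω|) ^ 2 + 2 * k ^ 2) := by
    intro ω
    by_cases hω : ω ∈ s
    · have hak : a ω ≤ (⨆ b, |X b ω - Y b ω|) + k :=
        Real.iSup_abs_le_iSup_abs_sub_add k.cast_nonneg hω
      have ha0 : 0 ≤ a ω := Real.iSup_nonneg fun _ => abs_nonneg _
      rw [Set.indicator_of_mem hω, Pi.one_apply, mul_one]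
      refine ENNReal.ofReal_le_ofReal ?_
      nlinarith [pow_le_pow_left₀ ha0 hak 2, sq_nonneg ((⨆ b, |X b ω - Y b ω|) - k)]
    · simp [hω]
  have hprod : (∫⁻ ω, ENNReal.ofReal (a ω ^ 2) ∂P) * P s
      = ∫⁻ ω, ENNReal.ofReal (a ω ^ 2) * s.indicator 1 ω ∂P := by
    rw [lintegral_mul_eq_lintegral_mul_lintegral_of_independent_measurableSpace
      (f := fun ω => ENNReal.ofReal (a ω ^ 2)) (g := s.indicator 1) hm₁ hm₂ hind
      (ENNReal.measurable_ofReal.comp (ha.pow_const 2)) (measurable_const.indicator hs),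
      lintegral_indicator_one (hm₂ _ hs)]
  have hfin : ∫⁻ ω, ENNReal.ofReal (a ω ^ 2) ∂P < ⊤ := by
    refine ENNReal.lt_top_of_mul_ne_top_left (hprod ▸ ?_) hk
    exact ((lintegral_mono hbound).trans_lt
      ((hu.const_mul 2).add (integrable_const _)).lintegral_lt_top).ne
  refine (memLp_two_iff_integrable_sq (ha.mono hm₁ le_rfl).aestronglyMeasurable).2
    ⟨((ha.mono hm₁ le_rfl).pow_const 2).aestronglyMeasurable, ?_⟩
  exact (hasFiniteIntegral_iff_ofReal (ae_of_all _ fun _ => sq_nonneg _)).2 hfin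

theorem integral_sq_iSup_abs_sub_le (hm₁ : m₁ ≤ mΩ) (hm₂ : m₂ ≤ mΩ) (hind : Indep m₁ m₂ P)
    (hX : ∀ b, Measurable[m₁] (X b)) (hY : ∀ b, Measurable[m₂] (Y b)) {c₁ c₂ A B : ℝ}
    (htailX : ∀ b t, 0 < t → P {ω | t ≤ |X b ω|} ≤ ENNReal.ofReal (c₁ / t ^ 2))
    (htailY : ∀ b t, 0 < t → P {ω | t ≤ |Y b ω|} ≤ ENNReal.ofReal (c₂ / t ^ 2))
    (hA : ∫ ω, ⨆ b, X b ω ^ 2 ∂P ≤ A) (hB : ∫ ω, ⨆ b, Y b ω ^ 2 ∂P ≤ B) :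
    ∫ ω, (⨆ b, |X b ω - Y b ω|) ^ 2 ∂P ≤ (√A + √B) ^ 2 := by
  by_cases hu : Integrable (fun ω => (⨆ b, |X b ω - Y b ω|) ^ 2) P
  swap
  · rw [integral_undef hu]
    positivity
  by_cases hbdd : P {ω | BddAbove (Set.range fun b => |X b ω - Y b ω|)} = 0
  · rw [integral_eq_zero_of_ae]
    · positivity
    filter_upwards [measure_eq_zero_iff_ae_notMem.1 hbdd] with ω hω
    simp [Real.iSup_of_not_bddAbove hω]
  have hcomm : ∀ b ω, |Y b ω - X b ω| = |X b ω - Y b ω| := fun _ _ => abs_sub_comm _ _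
  obtain ⟨k, hk⟩ := exists_measure_forall_abs_le_ne_zero hm₂ hind hX hY htailX hbdd
  obtain ⟨k', hk'⟩ := exists_measure_forall_abs_le_ne_zero hm₁ hind.symm hY hX htailY
    (by simpa only [hcomm] using hbdd)
  have ha := memLp_iSup_abs hm₁ hm₂ hind hX hY hk hu
  have hc := memLp_iSup_abs hm₂ hm₁ hind.symm hY hX hk' (by simpa only [hcomm] using hu)
  have hac : IndepFun (fun ω => ⨆ b, |X b ω|) (fun ω => ⨆ b, |Y b ω|) P :=
    (IndepFun_iff_Indep _ _ P).2 <| indep_of_indep_of_le_right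
      (indep_of_indep_of_le_left hind
        (Measurable.iSup fun b => measurable_abs.comp (hX b)).comap_le)
      (Measurable.iSup fun b => measurable_abs.comp (hY b)).comap_le
  calc ∫ ω, (⨆ b, |X b ω - Y b ω|) ^ 2 ∂P
      ≤ ∫ ω, ((⨆ b, |X b ω|) + ⨆ b, |Y b ω|) ^ 2 ∂P := by
        refine integral_mono_ae hu (ha.add hc).integrable_sq ?_
        filter_upwards [ae_iSup_abs_sub_le_add hm₁ hm₂ hind hX hY htailX htailY] with ω h
        exact pow_le_pow_left₀ (Real.iSup_nonneg fun _ => abs_nonneg _) h 2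
    _ ≤ (√(∫ ω, (⨆ b, |X b ω|) ^ 2 ∂P) + √(∫ ω, (⨆ b, |Y b ω|) ^ 2 ∂P)) ^ 2 :=
        integral_add_sq_le_of_indepFun ha hc hac
    _ ≤ (√A + √B) ^ 2 := by
        simp only [← Real.iSup_sq_eq_sq_iSup_abs]
        gcongr

end IndependentFamilies

noncomputable def sampleMean {Ω ι : Type*} (s : Finset ι) (Y : ι → Ω → ℝ) (ω : Ω) : ℝ :=
  (s.card : ℝ)⁻¹ * ∑ i ∈ s, Y i ω

section SampleMean

variable {Ω ι : Type*} [MeasurableSpace Ω] {P : Measure Ω} {s : Finset ι} {Y : ι → Ω → ℝ}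
  {Y₀ : Ω → ℝ}

lemma memLp_sampleMean (hY₀ : MemLp Y₀ 2 P) (hid : ∀ i ∈ s, IdentDistrib (Y i) Y₀ P P) :
    MemLp (sampleMean s Y) 2 P :=
  (memLp_finsetSum s fun i hi => (hid i hi).memLp_iff.2 hY₀).const_mul _

lemma integral_sampleMean [IsFiniteMeasure P] (hY₀ : MemLp Y₀ 2 P)
    (hid : ∀ i ∈ s, IdentDistrib (Y i) Y₀ P P) (hs : s.Nonempty) :
    ∫ ω, sampleMean s Y ω ∂P = ∫ ω, Y₀ ω ∂P := by
  simp only [sampleMean]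
  rw [integral_const_mul,
    integral_finsetSum s fun i hi => ((hid i hi).memLp_iff.2 hY₀).integrable one_le_two,
    Finset.sum_congr rfl fun i hi => (hid i hi).integral_eq, Finset.sum_const, nsmul_eq_mul,
    inv_mul_cancel_left₀ (Nat.cast_ne_zero.2 hs.card_pos.ne')]

lemma variance_sampleMean (hY₀ : MemLp Y₀ 2 P) (hid : ∀ i ∈ s, IdentDistrib (Y i) Y₀ P P)
    (hind : Set.Pairwise s fun i j => IndepFun (Y i) (Y j) P) :
    variance (sampleMean s Y) P = variance Y₀ P / s.card := by
  have hsum : sampleMean s Y = fun ω => (s.card : ℝ)⁻¹ * (∑ i ∈ s, Y i) ω := by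
    ext ω
    simp only [sampleMean, Finset.sum_apply]
  rw [hsum, variance_const_mul,
    IndepFun.variance_sum (fun i hi => (hid i hi).memLp_iff.2 hY₀) hind,
    Finset.sum_congr rfl fun i hi => (hid i hi).variance_eq, Finset.sum_const, nsmul_eq_mul]
  rcases eq_or_ne (s.card : ℝ) 0 with h | h
  · simp [h]
  · field_simp

lemma integral_sampleMean_sub_sq [IsFiniteMeasure P] (hY₀ : MemLp Y₀ 2 P)
    (hid : ∀ i ∈ s, IdentDistrib (Y i) Y₀ P P)
    (hind : Set.Pairwise s fun i j => IndepFun (Y i) (Y j) P) (hs : s.Nonempty) :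
    ∫ ω, (sampleMean s Y ω - ∫ ω, Y₀ ω ∂P) ^ 2 ∂P = variance Y₀ P / s.card := by
  rw [← integral_sampleMean hY₀ hid hs,
    ← variance_eq_integral (memLp_sampleMean hY₀ hid).aemeasurable,
    variance_sampleMean hY₀ hid hind]

lemma meas_ge_le_abs_sampleMean_sub [IsFiniteMeasure P] (hY₀ : MemLp Y₀ 2 P)
    (hid : ∀ i ∈ s, IdentDistrib (Y i) Y₀ P P)
    (hind : Set.Pairwise s fun i j => IndepFun (Y i) (Y j) P) (hs : s.Nonempty) {t : ℝ}
    (ht : 0 < t) :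
    P {ω | t ≤ |sampleMean s Y ω - ∫ ω, Y₀ ω ∂P|}
      ≤ ENNReal.ofReal (variance Y₀ P / s.card / t ^ 2) := by
  rw [← integral_sampleMean hY₀ hid hs, ← variance_sampleMean hY₀ hid hind]
  exact meas_ge_le_variance_div_sq (memLp_sampleMean hY₀ hid) ht

end SampleMean

section Folds

variable {K m q : ℕ}

lemma card_fold_s9 (hq : q < K) : (fold K m q).card = m := by
  rcases m.eq_zero_or_pos with rfl | hm
  · simp [fold]
  have hqK : q * m + m ≤ K * m := by nlinarith
  suffices fold K m q = Finset.Ico (q * m) (q * m + m) by simp [this]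
  ext i
  simp only [fold, Finset.mem_filter, Finset.mem_range, Finset.mem_Ico, Nat.div_eq_iff hm]
  omega

lemma card_filter_div_ne (hq : q < K) :
    ((Finset.range (K * m)).filter fun i => i / m ≠ q).card = K * m - m := by
  rw [Finset.filter_not, Finset.card_sdiff_of_subset (Finset.filter_subset _ _),
    Finset.card_range]
  exact congrArg (K * m - ·) (card_fold_s9 hq)

end Folds

section CrossValidation

variable {Ω E Λ : Type*} [mE : MeasurableSpace E] {n : ℕ} {z : ℕ → Ω → E} {Q : Λ → E → ℝ}

lemma measurable_sum_filter_iSup_comap (p : ℕ → Prop) [DecidablePred p] {f : E → ℝ}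
    (hf : Measurable f) :
    Measurable[⨆ i ∈ {i : Fin n | p i}, mE.comap (z i)]
      fun ω => ∑ i ∈ (Finset.range n).filter p, f (z i ω) := by
  refine Finset.measurable_sum _ fun i hi => ?_
  rw [Finset.mem_filter, Finset.mem_range] at hi
  exact (hf.comp (comap_measurable (z i))).mono
    (le_iSup₂ (f := fun (j : Fin n) (_ : j ∈ {j : Fin n | p j}) => mE.comap (z j))
      ⟨i, hi.1⟩ hi.2) le_rfl

variable [MeasurableSpace Ω] {P : Measure Ω}

lemma iSup_comap_le (hz_meas : ∀ i < n, Measurable (z i)) (S : Set (Fin n)) :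
    ⨆ i ∈ S, mE.comap (z i) ≤ ‹MeasurableSpace Ω› :=
  iSup₂_le fun i _ => (hz_meas i i.isLt).comap_le

lemma indep_iSup_comap (hz_meas : ∀ i < n, Measurable (z i))
    (hz_indep : iIndepFun (fun i : Fin n => z i) P) (p : ℕ → Prop) :
    Indep (⨆ i ∈ {i : Fin n | p i}, mE.comap (z i))
      (⨆ i ∈ {i : Fin n | ¬ p i}, mE.comap (z i)) P :=
  indep_iSup_of_disjoint (fun i : Fin n => (hz_meas i i.isLt).comap_le)
    ((iIndepFun_iff_iIndep _ (fun i : Fin n => z i) P).1 hz_indep)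
    (Set.disjoint_left.2 fun i (hp : p i) (hnp : ¬ p i) => hnp hp)

lemma identDistrib_comp_of_map_eq (hz_meas : ∀ i < n, Measurable (z i))
    (hz_ident : ∀ i < n, P.map (z i) = P.map (z 0)) {f : E → ℝ} (hf : Measurable f) {i : ℕ}
    (hi : i < n) : IdentDistrib (fun ω => f (z i ω)) (fun ω => f (z 0 ω)) P P :=
  IdentDistrib.comp ⟨(hz_meas i hi).aemeasurable,
    (hz_meas 0 (i.zero_le.trans_lt hi)).aemeasurable, hz_ident i hi⟩ hf

lemma indepFun_comp_of_iIndepFun (hz_indep : iIndepFun (fun i : Fin n => z i) P) {f : E → ℝ}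
    (hf : Measurable f) {i j : ℕ} (hi : i < n) (hj : j < n) (hij : i ≠ j) :
    IndepFun (fun ω => f (z i ω)) (fun ω => f (z j ω)) P :=
  (hz_indep.indepFun (i := ⟨i, hi⟩) (j := ⟨j, hj⟩) (by simpa using hij)).comp hf hf

theorem sampleMean_sub_popErr_bounds [IsProbabilityMeasure P] [Nonempty Λ]
    (hz_meas : ∀ i < n, Measurable (z i))
    (hz_indep : iIndepFun (fun i : Fin n => z i) P)
    (hz_ident : ∀ i < n, P.map (z i) = P.map (z 0)) (hQ_meas : ∀ b, Measurable (Q b))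
    (hQ_L2 : ∀ b, MemLp (fun ω => Q b (z 0 ω)) 2 P) {S : ℝ}
    (hvar : ∀ b, variance (fun ω => Q b (z 0 ω)) P ≤ S) {s : Finset ℕ} (hs : ∀ i ∈ s, i < n)
    (hs₀ : s.Nonempty) :
    (⨆ b, ∫ ω, (sampleMean s (fun i ω => Q b (z i ω)) ω - popErr P z Q b) ^ 2 ∂P)
        ≤ S / s.card ∧
      ∀ b t, 0 < t → P {ω | t ≤ |sampleMean s (fun i ω => Q b (z i ω)) ω - popErr P z Q b|}
        ≤ ENNReal.ofReal (S / s.card / t ^ 2) := by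
  have hid b : ∀ i ∈ s, IdentDistrib (fun ω => Q b (z i ω)) (fun ω => Q b (z 0 ω)) P P :=
    fun i hi => identDistrib_comp_of_map_eq hz_meas hz_ident (hQ_meas b) (hs i hi)
  have hind b : Set.Pairwise s fun i j =>
      IndepFun (fun ω => Q b (z i ω)) (fun ω => Q b (z j ω)) P :=
    fun i hi j hj hij => indepFun_comp_of_iIndepFun hz_indep (hQ_meas b) (hs i hi) (hs j hj) hij
  have hS : 0 ≤ S := (variance_nonneg _ P).trans (hvar (Classical.arbitrary Λ))
  refine ⟨Real.iSup_le (fun b => ?_) ?_, fun b t ht => ?_⟩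
  · rw [popErr, integral_sampleMean_sub_sq (hQ_L2 b) (hid b) (hind b) hs₀]
    gcongr
    exact hvar b
  · positivity
  · refine (meas_ge_le_abs_sampleMean_sub (hQ_L2 b) (hid b) (hind b) hs₀ ht).trans
      (ENNReal.ofReal_le_ofReal ?_)
    gcongr
    exact hvar b

end CrossValidation

section RoundErrors

variable {Ω E Λ : Type*} {K m q : ℕ} {z : ℕ → Ω → E} {Q : Λ → E → ℝ}

lemma Rs_eq_sampleMean (hq : q < K) (b : Λ) :
    Rs K m z Q b q = sampleMean (fold K m q) fun i ω => Q b (z i ω) := by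
  ext ω
  simp only [Rs, sampleMean, card_fold_s9 hq, one_div]

lemma Rt_eq_sampleMean (hq : q < K) (b : Λ) :
    Rt K m z Q b q
      = sampleMean ((Finset.range (K * m)).filter fun i => i / m ≠ q) fun i ω => Q b (z i ω) := by
  ext ω
  simp only [Rt, sampleMean, card_filter_div_ne hq, one_div]

variable [mE : MeasurableSpace E]

lemma measurable_Rs_s9 (hQ_meas : ∀ b, Measurable (Q b)) (b : Λ) :
    Measurable[⨆ i ∈ {i : Fin (K * m) | (i : ℕ) / m = q}, mE.comap (z i)] (Rs K m z Q b q) :=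
  (measurable_sum_filter_iSup_comap _ (hQ_meas b)).const_mul _

lemma measurable_Rt (hQ_meas : ∀ b, Measurable (Q b)) (b : Λ) :
    Measurable[⨆ i ∈ {i : Fin (K * m) | ¬ (i : ℕ) / m = q}, mE.comap (z i)] (Rt K m z Q b q) :=
  (measurable_sum_filter_iSup_comap (fun i => i / m ≠ q) (hQ_meas b)).const_mul _

variable [MeasurableSpace Ω] {P : Measure Ω}

lemma measurable_Ugap [Countable Λ] [Nonempty Λ] (hz_meas : ∀ i < K * m, Measurable (z i))
    (hQ_meas : ∀ b, Measurable (Q b)) : Measurable (Ugap K m z Q q) :=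
  Measurable.iSup fun b => (((measurable_Rs_s9 hQ_meas b).mono (iSup_comap_le hz_meas _) le_rfl).sub
    ((measurable_Rt hQ_meas b).mono (iSup_comap_le hz_meas _) le_rfl)).abs

theorem Rs_sub_popErr_bounds [IsProbabilityMeasure P] [Nonempty Λ]
    (hz_meas : ∀ i < K * m, Measurable (z i)) (hz_indep : iIndepFun (fun i : Fin (K * m) => z i) P)
    (hz_ident : ∀ i < K * m, P.map (z i) = P.map (z 0)) (hQ_meas : ∀ b, Measurable (Q b))
    (hQ_L2 : ∀ b, MemLp (fun ω => Q b (z 0 ω)) 2 P) {S : ℝ}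
    (hvar : ∀ b, variance (fun ω => Q b (z 0 ω)) P ≤ S) (hm : 1 ≤ m) (hq : q < K) :
    (⨆ b, ∫ ω, (Rs K m z Q b q ω - popErr P z Q b) ^ 2 ∂P) ≤ S / m ∧
      ∀ b t, 0 < t → P {ω | t ≤ |Rs K m z Q b q ω - popErr P z Q b|}
        ≤ ENNReal.ofReal (S / m / t ^ 2) := by
  have hs₀ : (fold K m q).Nonempty := Finset.card_pos.1 (by rw [card_fold_s9 hq]; omega)
  simpa only [← Rs_eq_sampleMean hq, card_fold_s9 hq] using
    sampleMean_sub_popErr_bounds (s := fold K m q) hz_meas hz_indep hz_ident hQ_meas hQ_L2 hvar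
      (fun i hi => Finset.mem_range.1 (Finset.mem_filter.1 hi).1) hs₀

theorem Rt_sub_popErr_bounds [IsProbabilityMeasure P] [Nonempty Λ]
    (hz_meas : ∀ i < K * m, Measurable (z i)) (hz_indep : iIndepFun (fun i : Fin (K * m) => z i) P)
    (hz_ident : ∀ i < K * m, P.map (z i) = P.map (z 0)) (hQ_meas : ∀ b, Measurable (Q b))
    (hQ_L2 : ∀ b, MemLp (fun ω => Q b (z 0 ω)) 2 P) {S : ℝ}
    (hvar : ∀ b, variance (fun ω => Q b (z 0 ω)) P ≤ S) (hK : 2 ≤ K) (hm : 1 ≤ m) (hq : q < K) :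
    (⨆ b, ∫ ω, (Rt K m z Q b q ω - popErr P z Q b) ^ 2 ∂P) ≤ S / (K * m - m : ℕ) ∧
      ∀ b t, 0 < t → P {ω | t ≤ |Rt K m z Q b q ω - popErr P z Q b|}
        ≤ ENNReal.ofReal (S / (K * m - m : ℕ) / t ^ 2) := by
  have hs₀ : ((Finset.range (K * m)).filter fun i => i / m ≠ q).Nonempty := by
    refine Finset.card_pos.1 ?_
    rw [card_filter_div_ne hq]
    have : 2 * m ≤ K * m := Nat.mul_le_mul_right m hK
    omega
  simpa only [← Rt_eq_sampleMean hq, card_filter_div_ne hq] using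
    sampleMean_sub_popErr_bounds (s := (Finset.range (K * m)).filter fun i => i / m ≠ q)
      hz_meas hz_indep hz_ident hQ_meas hQ_L2 hvar
      (fun i hi => Finset.mem_range.1 (Finset.mem_filter.1 hi).1) hs₀

end RoundErrors

lemma sq_sqrt_div_add_sqrt_div {a : ℝ} (ha : 0 ≤ a) (x y : ℝ) :
    (√(a / x) + √(a / y)) ^ 2 = a * (1 / √x + 1 / √y) ^ 2 := by
  rw [Real.sqrt_div ha, Real.sqrt_div ha, div_eq_mul_one_div (√a), div_eq_mul_one_div (√a),
    ← mul_add, mul_pow, Real.sq_sqrt ha]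

lemma one_div_sqrt_add_one_div_sqrt_sq_le {x y : ℝ} (hx : 0 < x) (hxy : x ≤ y) :
    (1 / √x + 1 / √y) ^ 2 ≤ 4 / x := by
  have h : 1 / √y ≤ 1 / √x :=
    one_div_le_one_div_of_le (Real.sqrt_pos.2 hx) (Real.sqrt_le_sqrt hxy)
  calc (1 / √x + 1 / √y) ^ 2 ≤ (2 * (1 / √x)) ^ 2 := by gcongr; linarith
    _ = 4 / x := by rw [mul_pow, div_pow, Real.sq_sqrt hx.le]; ring

theorem second_moment_bound_Ugap_general
    {Ω E Λ : Type*} [MeasurableSpace Ω] [MeasurableSpace E] [Countable Λ] [Nonempty Λ]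
    (P : Measure Ω) [IsProbabilityMeasure P]
    (K m : ℕ) (hK : 2 ≤ K) (hm : 1 ≤ m)
    (z : ℕ → Ω → E)
    (hz_meas : ∀ i < K * m, Measurable (z i))
    (hz_indep : iIndepFun
      (fun i : Fin (K * m) => z i) P)
    (hz_ident : ∀ i < K * m, P.map (z i) = P.map (z 0))
    (Q : Λ → E → ℝ)
    (hQ_meas : ∀ b, Measurable (Q b))
    (hQ_L2 : ∀ b, MemLp (fun ω => Q b (z 0 ω)) 2 P)
    (q : ℕ) (hq : q < K)
    (θ S : ℝ) (hθ : 0 < θ)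
    (hSbdd : BddAbove (Set.range fun b : Λ => variance (fun ω => Q b (z 0 ω)) P))
    (hS : S = ⨆ b : Λ, variance (fun ω => Q b (z 0 ω)) P)
    (hint_s : ∫ ω, (⨆ b : Λ, (Rs K m z Q b q ω - popErr P z Q b) ^ 2) ∂P
      ≤ θ * ⨆ b : Λ, ∫ ω, (Rs K m z Q b q ω - popErr P z Q b) ^ 2 ∂P)
    (hint_t : ∫ ω, (⨆ b : Λ, (Rt K m z Q b q ω - popErr P z Q b) ^ 2) ∂P
      ≤ θ * ⨆ b : Λ, ∫ ω, (Rt K m z Q b q ω - popErr P z Q b) ^ 2 ∂P) :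
    (∫ ω, (Ugap K m z Q q ω) ^ 2 ∂P
      ≤ θ * S * (1 / Real.sqrt m + 1 / Real.sqrt ((K * m - m : ℕ))) ^ 2)
    ∧ variance (Ugap K m z Q q) P ≤ ∫ ω, (Ugap K m z Q q ω) ^ 2 ∂P
    ∧ ∫ ω, (Ugap K m z Q q ω) ^ 2 ∂P ≤ 4 * θ * S / m := by
  have hS0 : 0 ≤ S := hS ▸ Real.iSup_nonneg fun b => variance_nonneg _ P
  have hvar : ∀ b, variance (fun ω => Q b (z 0 ω)) P ≤ S := fun b => hS ▸ le_ciSup hSbdd b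
  obtain ⟨hRs2, hRs_tail⟩ := Rs_sub_popErr_bounds hz_meas hz_indep hz_ident hQ_meas hQ_L2 hvar hm hq
  obtain ⟨hRt2, hRt_tail⟩ :=
    Rt_sub_popErr_bounds hz_meas hz_indep hz_ident hQ_meas hQ_L2 hvar hK hm hq
  have hU : ∫ ω, Ugap K m z Q q ω ^ 2 ∂P ≤ θ * S * (1 / √m + 1 / √((K * m - m : ℕ))) ^ 2 := by
    rw [← sq_sqrt_div_add_sqrt_div (mul_nonneg hθ.le hS0), mul_div_assoc, mul_div_assoc]
    simpa only [Ugap, sub_sub_sub_cancel_right] using integral_sq_iSup_abs_sub_le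
      (iSup_comap_le hz_meas _) (iSup_comap_le hz_meas _)
      (indep_iSup_comap hz_meas hz_indep fun i => i / m = q)
      (fun b => (measurable_Rs_s9 hQ_meas b).sub_const _)
      (fun b => (measurable_Rt hQ_meas b).sub_const _) hRs_tail hRt_tail
      (hint_s.trans (by gcongr)) (hint_t.trans (by gcongr))
  have hmn : (m : ℝ) ≤ (K * m - m : ℕ) := by
    have : 2 * m ≤ K * m := Nat.mul_le_mul_right m hK
    exact_mod_cast (by omega : m ≤ K * m - m)
  refine ⟨hU, ?_, hU.trans ?_⟩
  · simpa using variance_le_expectation_sq (measurable_Ugap hz_meas hQ_meas).aestronglyMeasurable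
  · calc θ * S * (1 / √m + 1 / √((K * m - m : ℕ))) ^ 2 ≤ θ * S * (4 / m) := by
          gcongr
          exact one_div_sqrt_add_one_div_sqrt_sq_le (by exact_mod_cast hm) hmn
      _ = 4 * θ * S / m := by ring

/-- **Second-moment bound for the round-`q` error gap.**
Under the interchange inequalities
`E[sup_b (Rs b q - R b)²] ≤ θ sup_b E[(Rs b q - R b)²]` and
`E[sup_b (Rt b q - R b)²] ≤ θ sup_b E[(Rt b q - R b)²]`, with
`S = sup_{b ∈ Λ} Var (Q b) < ∞`, we have
`E[U q²] ≤ θ S (1/√m + 1/√n_t)²`, and in particular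
`Var (U q) ≤ E[U q²] ≤ 4 θ S / m`. -/
theorem second_moment_bound_Ugap
    {Ω E Λ : Type*} [MeasurableSpace Ω] [MeasurableSpace E] [Countable Λ] [Nonempty Λ]
    (P : Measure Ω) [IsProbabilityMeasure P]
    (K m : ℕ) (hK : 2 ≤ K) (hm : 1 ≤ m)
    (z : ℕ → Ω → E)
    (hz_meas : ∀ i < K * m, Measurable (z i))
    (hz_indep : iIndepFun
      (fun i : Fin (K * m) => z i) P)
    (hz_ident : ∀ i < K * m, P.map (z i) = P.map (z 0))
    (Q : Λ → E → ℝ)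
    (hQ_meas : ∀ b, Measurable (Q b))
    (hQ_nonneg : ∀ b e, 0 ≤ Q b e)
    (hQ_L2 : ∀ b, MemLp (fun ω => Q b (z 0 ω)) 2 P)
    (q : ℕ) (hq : q < K)
    (θ S : ℝ) (hθ : 0 < θ)
    (hSbdd : BddAbove (Set.range fun b : Λ => variance (fun ω => Q b (z 0 ω)) P))
    (hS : S = ⨆ b : Λ, variance (fun ω => Q b (z 0 ω)) P)
    (hint_s : ∫ ω, (⨆ b : Λ, (Rs K m z Q b q ω - popErr P z Q b) ^ 2) ∂P
      ≤ θ * ⨆ b : Λ, ∫ ω, (Rs K m z Q b q ω - popErr P z Q b) ^ 2 ∂P)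
    (hint_t : ∫ ω, (⨆ b : Λ, (Rt K m z Q b q ω - popErr P z Q b) ^ 2) ∂P
      ≤ θ * ⨆ b : Λ, ∫ ω, (Rt K m z Q b q ω - popErr P z Q b) ^ 2 ∂P) :
    (∫ ω, (Ugap K m z Q q ω) ^ 2 ∂P
      ≤ θ * S * (1 / Real.sqrt m + 1 / Real.sqrt ((K * m - m : ℕ))) ^ 2)
    ∧ variance (Ugap K m z Q q) P ≤ ∫ ω, (Ugap K m z Q q ω) ^ 2 ∂P
    ∧ ∫ ω, (Ugap K m z Q q ω) ^ 2 ∂P ≤ 4 * θ * S / m :=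
  second_moment_bound_Ugap_general P K m hK hm z hz_meas hz_indep hz_ident Q hQ_meas hQ_L2 q hq θ S
    hθ hSbdd hS hint_s hint_t
end
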